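/- (Céa's Lemma) Let V be a normed vector space, A a bilinear form on V that is continuous with constant γ > 0 (|A(v,w)| ≤ γ‖v‖‖w‖) and V-elliptic with constant α > 0 (α‖v‖² ≤ A(v,v)), and L a linear form on V. If p ∈ V satisfies A(p,v) = L(v) for all v ∈ V, and p_h ∈ V_h satisfies A(p_h, v_h) = L(v_h) for all v_h in a subspace V_h ⊆ V, and p ≠ p_h, then ‖p − p_h‖ ≤ (γ/α) ‖p − v_h‖ for every v_h ∈ V_h. -/
import Mathlib


/-- Céa's Lemma. -/
theorem cea_lemma {V : Type*} [NormedAddCommGroup V] [NormedSpace ℝ V]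
    (A : V →ₗ[ℝ] V →ₗ[ℝ] ℝ) (L : V →ₗ[ℝ] ℝ) (Vh : Submodule ℝ V)
    (γ α : ℝ) (hγ : 0 < γ) (hα : 0 < α)
    (hcont : ∀ v w : V, |A v w| ≤ γ * ‖v‖ * ‖w‖)
    (hell : ∀ v : V, α * ‖v‖^2 ≤ A v v)
    (p : V) (hp : ∀ v : V, A p v = L v)
    (ph : V) (hphmem : ph ∈ Vh) (hph : ∀ vh ∈ Vh, A ph vh = L vh)
    (hne : p ≠ ph) :
    ∀ vh ∈ Vh, ‖p - ph‖ ≤ (γ / α) * ‖p - vh‖ := by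
  intro vh hvh
  have he : (0:ℝ) < ‖p - ph‖ := by
    rw [norm_pos_iff, sub_ne_zero]; exact hne
  -- Galerkin orthogonality
  have horth : ∀ w ∈ Vh, A (p - ph) w = 0 := by
    intro w hw
    simp [map_sub, hp w, hph w hw]
  have hmem : ph - vh ∈ Vh := Vh.sub_mem hphmem hvh
  have key : A (p - ph) (p - ph) = A (p - ph) (p - vh) := by
    have h0 := horth _ hmem
    have hsplit : (A (p - ph)) (p - vh) = (A (p - ph)) (p - ph) + (A (p - ph)) (ph - vh) := by
      rw [← map_add]; congr 1; abel
    rw [hsplit, h0, add_zero]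
  have h1 : α * ‖p - ph‖^2 ≤ γ * ‖p - ph‖ * ‖p - vh‖ := by
    calc α * ‖p - ph‖^2 ≤ A (p - ph) (p - ph) := hell _
      _ = A (p - ph) (p - vh) := key
      _ ≤ γ * ‖p - ph‖ * ‖p - vh‖ := le_trans (le_abs_self _) (hcont _ _)
  have h2 : α * ‖p - ph‖ ≤ γ * ‖p - vh‖ := by
    have := mul_le_mul_of_nonneg_right h1 (le_of_lt (inv_pos.mpr he))
    have hne' : ‖p - ph‖ ≠ 0 := ne_of_gt he
    field_simp at this ⊢
    nlinarith [sq_nonneg (‖p - ph‖)]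
  rw [div_mul_eq_mul_div, le_div_iff₀ hα]
  linarith
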